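/- arXiv:2109.02195 — 3 statements merged into one kernel-verified Lean document; each statement's English description precedes it below -/
import Mathlib

section
/- There exists a constant C > 0 such that for all integers m ≥ 2 and all j with 1 ≤ j ≤ ⌊m/2⌋, the quantity binom(m, j) · (j−3)!^{1/4} (j−1)!^{3/4} (m−j−2)! / ((m−j+1)(m−3)!) is bounded by C m³/(m−j)³, and hence by C. -/
open MeasureTheory Finset

noncomputable section

/-- Points of `ℝ³`. -/
abbrev Vec3 := Fin 3 → ℝ

/-- Multi-indices in `ℕ₀³`. -/
abbrev MIdx := Fin 3 → ℕ

/-- Total degree `|α|` of a multi-index. -/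
def wt (α : MIdx) : ℕ := ∑ i, α i

/-- Multi-index factorial `α! = α₁!α₂!α₃!`. -/
def mfact (α : MIdx) : ℕ := ∏ i, Nat.factorial (α i)

variable {E : Type*} [NormedAddCommGroup E] [NormedSpace ℝ E]

/-- Partial derivative `∂_i`. -/
def pd (i : Fin 3) (f : Vec3 → E) : Vec3 → E :=
  fun x => fderiv ℝ f x (Pi.single i 1)

/-- Iterated partial derivative `∂^α`. -/
def pda (α : MIdx) (f : Vec3 → E) : Vec3 → E :=
  (pd 0)^[α 0] ((pd 1)^[α 1] ((pd 2)^[α 2] f))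

/-- The `L²(ℝ³)` norm. -/
def l2 (f : Vec3 → E) : ℝ := (eLpNorm f 2 volume).toReal

/-- The summand family of the analytic norm `‖·‖_{A(τ)}`
(with the convention `n! = 1` for `n < 0`, realized by truncated subtraction). -/
def AFam (τ : ℝ) (u : Vec3 → E) : MIdx → ℝ :=
  fun α => τ ^ wt α / (Nat.factorial (wt α - 3)) * l2 (pda α u)

/-- The analytic norm `‖u‖_{A(τ)} = Σ_m Σ_{|α|=m} (τ^m/(m-3)!) ‖∂^α u‖_{L²}`. -/
def anorm (τ : ℝ) (u : Vec3 → E) : ℝ := ∑' α : MIdx, AFam τ u α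

/-- The summand family of the dissipative analytic norm `‖·‖_{Ã(τ)}`. -/
def DFam (τ : ℝ) (u : Vec3 → E) : MIdx → ℝ :=
  fun α => (wt α) * τ ^ (wt α - 1) / (Nat.factorial (wt α - 3)) * l2 (pda α u)

/-- The dissipative analytic norm `‖u‖_{Ã(τ)} = Σ_{m≥1} Σ_{|α|=m} (m τ^{m-1}/(m-3)!) ‖∂^α u‖_{L²}`
(the `m = 0` term vanishes since it carries the factor `m`). -/
def danorm (τ : ℝ) (u : Vec3 → E) : ℝ := ∑' α : MIdx, DFam τ u α

/-- Time derivative `∂_t` of a time-dependent function. -/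
def tderiv (f : ℝ → Vec3 → E) : ℝ → Vec3 → E := fun t x => deriv (fun s => f s x) t

/-- The pair `u = (p, v)`. -/
def pairF (p : Vec3 → ℝ) (v : Vec3 → Vec3) : Vec3 → ℝ × Vec3 := fun x => (p x, v x)

/-- `(p, v)` solves the symmetrized isentropic Euler system
`E(εu)(∂_t u + v·∇u) + (1/ε) L(∂_x) u = 0` on `[0, T]`, componentwise:
`a(εp)(∂_t p + v·∇p) + (1/ε) div v = 0` and `r(εp)(∂_t v + v·∇v) + (1/ε) ∇p = 0`. -/
def IsEulerSol (a r : ℝ → ℝ) (ε : ℝ) (p : ℝ → Vec3 → ℝ) (v : ℝ → Vec3 → Vec3)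
    (T : ℝ) : Prop :=
  ∀ t ∈ Set.Icc (0:ℝ) T, ∀ x : Vec3,
    (a (ε * p t x) * (tderiv p t x + ∑ i, v t x i * pd i (p t) x)
      + (1/ε) * ∑ i, pd i (fun y => v t y i) x = 0)
    ∧ ∀ j, r (ε * p t x) * (tderiv v t x j + ∑ i, v t x i * pd i (fun y => v t y j) x)
      + (1/ε) * pd j (p t) x = 0

/-- Smoothness of a time dependent pair `(p, v)` in space and time. -/
def Smooth2 (p : ℝ → Vec3 → ℝ) (v : ℝ → Vec3 → Vec3) : Prop :=
  (∀ t, ContDiff ℝ (⊤ : ℕ∞) (p t)) ∧ (∀ t, ContDiff ℝ (⊤ : ℕ∞) (v t)) ∧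
  (∀ x, ContDiff ℝ (⊤ : ℕ∞) (fun t => p t x)) ∧ (∀ x, ContDiff ℝ (⊤ : ℕ∞) (fun t => v t x))

/-- The initial data bound `Σ_m Σ_{|α|=m} (τ₀^m/(m−3)!) ‖∂^α u₀‖_{L²} ≤ M₀`
(finiteness of the sum included). -/
def InitBound (τ₀ M₀ : ℝ) (u₀ : Vec3 → ℝ × Vec3) : Prop :=
  Summable (AFam τ₀ u₀) ∧ anorm τ₀ u₀ ≤ M₀

/-- The linear order `α ≺ β` on multi-indices: `|α| < |β|`, or `|α| = |β|`
and `α` precedes `β` lexicographically. -/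
def mlt (α β : MIdx) : Prop :=
  wt α < wt β ∨ (wt α = wt β ∧ ∃ k : Fin 3, (∀ j, j < k → α j = β j) ∧ α k < β k)

/-- The index set `P_s(i, β)` of the multivariate Faà di Bruno formula: tuples
`(k₁,…,k_s; λ₁,…,λ_s)` with `k_l ∈ ℕ`, `λ_l ∈ ℕ₀³`, `0 ≺ λ₁ ≺ ⋯ ≺ λ_s`,
`Σ k_l = i` and `Σ k_l λ_l = β`. -/
def Pset (s i : ℕ) (β : MIdx) : Set ((Fin s → ℕ) × (Fin s → MIdx)) :=
  {kl | (∀ l, 0 < kl.1 l) ∧ (∀ l, mlt 0 (kl.2 l)) ∧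
    (∀ l l', l < l' → mlt (kl.2 l) (kl.2 l')) ∧
    (∑ l, kl.1 l = i) ∧ (∑ l, kl.1 l • kl.2 l = β)}

/-- The operator `w ↦ E(εu)⁻¹ L(∂_x) w = (a(εp)⁻¹ div w₂, r(εp)⁻¹ ∇w₁)`. -/
def EinvL (a r : ℝ → ℝ) (ε : ℝ) (p : Vec3 → ℝ) (w : Vec3 → ℝ × Vec3) :
    Vec3 → ℝ × Vec3 :=
  fun x => ((a (ε * p x))⁻¹ * ∑ i, pd i (fun y => (w y).2 i) x,
            fun j => (r (ε * p x))⁻¹ * pd j (fun y => (w y).1) x)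

lemma natkey (m j : ℕ) (h2 : 2 ≤ m) (h1 : 1 ≤ j) (hj : j ≤ m / 2) :
    Nat.choose m j * Nat.factorial (j-1) * Nat.factorial (m-j-2) * (m-j)^3
      ≤ 2 * m^3 * (m-j+1) * Nat.factorial (m-3) := by
  rcases lt_or_ge m 6 with hm6 | hm6
  · interval_cases m <;> interval_cases j <;> decide
  · obtain ⟨a, rfl⟩ : ∃ a, j = a + 1 := ⟨j-1, by omega⟩
    obtain ⟨e, rfl⟩ : ∃ e, m = a + e + 4 := ⟨m - a - 4, by omega⟩
    rw [show a + e + 4 - (a+1) - 2 = e + 1 by omega,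
        show a + e + 4 - (a+1) = e + 3 by omega,
        show a + 1 - 1 = a by omega,
        show a + e + 4 - 3 = a + e + 1 by omega]
    have hle : a + 1 ≤ a + e + 4 := by omega
    have hch := Nat.choose_mul_factorial_mul_factorial hle
    rw [show a + e + 4 - (a+1) = e + 3 by omega] at hch
    have hfac : Nat.factorial (a+e+4)
        = (a+e+4)*((a+e+3)*((a+e+2)*Nat.factorial (a+e+1))) := by
      rw [show a+e+4 = ((a+e+1)+1+1)+1 by ring, Nat.factorial_succ,
          Nat.factorial_succ, Nat.factorial_succ]
    apply Nat.le_of_mul_le_mul_right _ (show 0 < (a+1)*((e+2)*(e+3)) by positivity)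
    have lhs_eq : Nat.choose (a+e+4) (a+1) * Nat.factorial a * Nat.factorial (e+1)
          * (e+3)^3 * ((a+1)*((e+2)*(e+3)))
        = ((a+e+4)*((a+e+3)*((a+e+2)*(e+3)^3))) * Nat.factorial (a+e+1) := by
      have h1 : Nat.factorial (a+1) = (a+1) * Nat.factorial a := Nat.factorial_succ a
      have h2 : Nat.factorial (e+3) = (e+3)*((e+2)*Nat.factorial (e+1)) := by
        rw [show e+3 = ((e+1)+1)+1 by ring, Nat.factorial_succ, Nat.factorial_succ]
      calc Nat.choose (a+e+4) (a+1) * Nat.factorial a * Nat.factorial (e+1)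
          * (e+3)^3 * ((a+1)*((e+2)*(e+3)))
          = (Nat.choose (a+e+4) (a+1) * Nat.factorial (a+1) * Nat.factorial (e+3)) * (e+3)^3 := by
            rw [h1, h2]; ring
        _ = Nat.factorial (a+e+4) * (e+3)^3 := by rw [hch]
        _ = _ := by rw [hfac]; ring
    rw [lhs_eq]
    have poly : (a+e+4)*((a+e+3)*((a+e+2)*(e+3)^3))
        ≤ 2*(a+e+4)^3*(e+3+1)*((a+1)*((e+2)*(e+3))) := by
      have h3 : (e+3)^2 ≤ 2*((e+4)*(e+2)) := by nlinarith [sq_nonneg e]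
      calc (a+e+4)*((a+e+3)*((a+e+2)*(e+3)^3))
          ≤ (a+e+4)*((a+e+4)*((a+e+4)*(e+3)^3)) := by gcongr <;> omega
        _ = (a+e+4)^3 * ((e+3)^2 * (e+3)) := by ring
        _ ≤ (a+e+4)^3 * ((2*((e+4)*(e+2))) * (e+3)) := by gcongr
        _ = 2*(a+e+4)^3*(e+3+1)*(1*((e+2)*(e+3))) := by ring
        _ ≤ 2*(a+e+4)^3*(e+3+1)*((a+1)*((e+2)*(e+3))) := by gcongr <;> omega
    calc ((a+e+4)*((a+e+3)*((a+e+2)*(e+3)^3))) * Nat.factorial (a+e+1)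
        ≤ (2*(a+e+4)^3*(e+3+1)*((a+1)*((e+2)*(e+3)))) * Nat.factorial (a+e+1) :=
          Nat.mul_le_mul_right _ poly
      _ = 2*(a+e+4)^3*(e+3+1)*Nat.factorial (a+e+1)*((a+1)*((e+2)*(e+3))) := by ring

/-- there is `C > 0` such that for `2 ≤ m` and `1 ≤ j ≤ ⌊m/2⌋`,
`binom(m,j)·(j−3)!^{1/4}(j−1)!^{3/4}(m−j−2)!/((m−j+1)(m−3)!) ≤ C m³/(m−j)³ ≤ C`
(convention `n! = 1` for negative `n`, realized by truncated subtraction). -/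
theorem statement11 :
    ∃ C : ℝ, 0 < C ∧ ∀ m j : ℕ, 2 ≤ m → 1 ≤ j → j ≤ m / 2 →
      ((Nat.choose m j : ℝ) * (Nat.factorial (j - 3) : ℝ) ^ ((1:ℝ)/4) *
          (Nat.factorial (j - 1) : ℝ) ^ ((3:ℝ)/4) * (Nat.factorial (m - j - 2) : ℝ)) /
        (((m - j + 1 : ℕ) : ℝ) * (Nat.factorial (m - 3) : ℝ))
        ≤ C * (m : ℝ)^3 / ((m - j : ℕ) : ℝ)^3
      ∧
      ((Nat.choose m j : ℝ) * (Nat.factorial (j - 3) : ℝ) ^ ((1:ℝ)/4) *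
          (Nat.factorial (j - 1) : ℝ) ^ ((3:ℝ)/4) * (Nat.factorial (m - j - 2) : ℝ)) /
        (((m - j + 1 : ℕ) : ℝ) * (Nat.factorial (m - 3) : ℝ))
        ≤ C := by
  refine ⟨16, by norm_num, ?_⟩
  intro m j hm hj hjm
  have hd1 : 1 ≤ m - j := by omega
  have hm2d : (m:ℝ) ≤ 2 * ((m - j : ℕ) : ℝ) := by
    have : m ≤ 2 * (m - j) := by omega
    exact_mod_cast this
  have hdpos : (0:ℝ) < ((m - j : ℕ) : ℝ)^3 := by positivity
  have hDpos : (0:ℝ) < ((m - j + 1 : ℕ) : ℝ) * (Nat.factorial (m - 3) : ℝ) := by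
    have := Nat.factorial_pos (m - 3)
    positivity
  -- rpow bound
  have hfle : (Nat.factorial (j - 3) : ℝ) ≤ (Nat.factorial (j - 1) : ℝ) := by
    exact_mod_cast Nat.factorial_le (by omega)
  have hfpos : (0:ℝ) < (Nat.factorial (j - 1) : ℝ) := by
    exact_mod_cast Nat.factorial_pos _
  have hAB : (Nat.factorial (j - 3) : ℝ) ^ ((1:ℝ)/4) *
      (Nat.factorial (j - 1) : ℝ) ^ ((3:ℝ)/4) ≤ (Nat.factorial (j - 1) : ℝ) := by
    calc (Nat.factorial (j - 3) : ℝ) ^ ((1:ℝ)/4) * (Nat.factorial (j - 1) : ℝ) ^ ((3:ℝ)/4)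
        ≤ (Nat.factorial (j - 1) : ℝ) ^ ((1:ℝ)/4) * (Nat.factorial (j - 1) : ℝ) ^ ((3:ℝ)/4) := by
          gcongr
      _ = (Nat.factorial (j - 1) : ℝ) := by
          rw [← Real.rpow_add hfpos]; norm_num
  have hX : ((Nat.choose m j : ℝ) * (Nat.factorial (j - 3) : ℝ) ^ ((1:ℝ)/4) *
      (Nat.factorial (j - 1) : ℝ) ^ ((3:ℝ)/4) * (Nat.factorial (m - j - 2) : ℝ))
      ≤ ((Nat.choose m j * Nat.factorial (j-1) * Nat.factorial (m-j-2) : ℕ) : ℝ) := by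
    push_cast
    calc (Nat.choose m j : ℝ) * (Nat.factorial (j - 3) : ℝ) ^ ((1:ℝ)/4) *
        (Nat.factorial (j - 1) : ℝ) ^ ((3:ℝ)/4) * (Nat.factorial (m - j - 2) : ℝ)
        = (Nat.choose m j : ℝ) * ((Nat.factorial (j - 3) : ℝ) ^ ((1:ℝ)/4) *
          (Nat.factorial (j - 1) : ℝ) ^ ((3:ℝ)/4)) * (Nat.factorial (m - j - 2) : ℝ) := by ring
      _ ≤ (Nat.choose m j : ℝ) * (Nat.factorial (j - 1) : ℝ) * (Nat.factorial (m - j - 2) : ℝ) := by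
          gcongr
  have key : ((Nat.choose m j : ℝ) * (Nat.factorial (j - 3) : ℝ) ^ ((1:ℝ)/4) *
          (Nat.factorial (j - 1) : ℝ) ^ ((3:ℝ)/4) * (Nat.factorial (m - j - 2) : ℝ)) /
        (((m - j + 1 : ℕ) : ℝ) * (Nat.factorial (m - 3) : ℝ))
        ≤ 2 * (m : ℝ)^3 / ((m - j : ℕ) : ℝ)^3 := by
    rw [div_le_div_iff₀ hDpos hdpos]
    calc ((Nat.choose m j : ℝ) * (Nat.factorial (j - 3) : ℝ) ^ ((1:ℝ)/4) *
          (Nat.factorial (j - 1) : ℝ) ^ ((3:ℝ)/4) * (Nat.factorial (m - j - 2) : ℝ)) * ((m - j : ℕ) : ℝ)^3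
        ≤ ((Nat.choose m j * Nat.factorial (j-1) * Nat.factorial (m-j-2) : ℕ) : ℝ) * ((m - j : ℕ) : ℝ)^3 :=
          mul_le_mul_of_nonneg_right hX (by positivity)
      _ = ((Nat.choose m j * Nat.factorial (j-1) * Nat.factorial (m-j-2) * (m-j)^3 : ℕ) : ℝ) := by
          push_cast; ring
      _ ≤ ((2 * m^3 * (m-j+1) * Nat.factorial (m-3) : ℕ) : ℝ) := by
          exact_mod_cast natkey m j hm hj hjm
      _ = 2 * (m : ℝ)^3 * (((m - j + 1 : ℕ) : ℝ) * (Nat.factorial (m - 3) : ℝ)) := by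
          push_cast; ring
  constructor
  · refine key.trans ?_
    gcongr
    norm_num
  · refine key.trans ?_
    rw [div_le_iff₀ hdpos]
    have hcube := pow_le_pow_left₀ (by positivity : (0:ℝ) ≤ (m:ℝ)) hm2d 3
    nlinarith [hcube]

end
end

section
/- There exists a constant C > 0 with the following property. For all m ∈ ℕ, all j with ⌊m/2⌋ + 1 ≤ j ≤ m, all i, s with 1 ≤ i, s ≤ j, all multi-indices α, β ∈ ℕ₀³ with |α| = m, |β| = j, β ≤ α, and all (k₁,…,k_s; λ₁,…,λ_s) ∈ P_s(i,β), the quantity 𝒟 = binom(α, β) · (i−3)! (m−j−2)!^{1/4} (m−j)!^{3/4} |β|! / ((m−3)!(m−j+1)^{1/4}(m−j+3)^{3/4}) · (|λ_s|−1)!^{3(k_s−1)/4} (|λ_s|−3)!^{(k_s−1)/4} (|λ_s|−3)! / (k_s! (|λ_s|!)^{k_s}) · ∏_{l=1}^{s−1} (|λ_l|−1)!^{3k_l/4} (|λ_l|−3)!^{k_l/4} / (k_l! (|λ_l|!)^{k_l}) satisfies 𝒟 ≤ C · (i!/(k₁!⋯k_s!)) · i³. -/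
open MeasureTheory Finset

noncomputable section

variable {E : Type*} [NormedAddCommGroup E] [NormedSpace ℝ E]

/-!
Each factor of `𝒟` is estimated separately. Since `∏_c binom(α_c, β_c) ≤ binom(m, j)` and
`binom(m, j) j! (m-j)! = m!`, the prefactor is at most `m!/(m-3)! · (i-3)! ≤ m³ (i-3)!`.
Because `(n-3)! ≤ (n-1)! ≤ n!`, each factor of the product over `l < s` is at most `1/k_l!`, and
the last factor is at most `(N-3)!/(k_s! N!)` with `N = |λ_s|`. As `λ_s` is the largest of the
`λ_l`, `j = Σ k_l |λ_l| ≤ iN`, so `m < 2j ≤ 2iN` and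
`m³ (i-3)! (N-3)! / N! ≤ 8 i³ i! · N³ (N-3)!/N! ≤ 48 i³ i!`.
-/

open scoped Nat

theorem Nat.choose_mul_choose_le_add_choose (a b c d : ℕ) :
    a.choose c * b.choose d ≤ (a + b).choose (c + d) := by
  rw [Nat.add_choose_eq]
  exact single_le_sum (f := fun p : ℕ × ℕ => a.choose p.1 * b.choose p.2)
    (fun _ _ => Nat.zero_le _) (a := (c, d)) (by simp)

theorem Finset.prod_choose_le_choose_sum {ι : Type*} (t : Finset ι) (a b : ι → ℕ) :
    ∏ x ∈ t, (a x).choose (b x) ≤ (∑ x ∈ t, a x).choose (∑ x ∈ t, b x) := by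
  classical
  induction t using Finset.induction_on with
  | empty => simp
  | insert x t hx ih =>
    rw [prod_insert hx, sum_insert hx, sum_insert hx]
    exact (Nat.mul_le_mul_left _ ih).trans (Nat.choose_mul_choose_le_add_choose _ _ _ _)

theorem Nat.factorial_le_pow_three_mul_factorial_sub_three {n : ℕ} (hn : 1 ≤ n) :
    n ! ≤ n ^ 3 * (n - 3)! := by
  rcases le_or_gt 3 n with h3 | h3
  · rw [← Nat.factorial_mul_descFactorial h3, mul_comm]
    exact Nat.mul_le_mul_right _ (Nat.descFactorial_le_pow n 3)
  · interval_cases n <;> decide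

theorem Nat.pow_three_mul_factorial_sub_three_le {n : ℕ} (hn : 1 ≤ n) :
    n ^ 3 * (n - 3)! ≤ 6 * n ! := by
  match n, hn with
  | 1, _ => decide
  | 2, _ => decide
  | k + 3, _ =>
    have hcube : (k + 3) ^ 3 ≤ 6 * ((k + 3) * (k + 2) * (k + 1)) := by
      ring_nf; nlinarith [Nat.zero_le (k ^ 3), Nat.zero_le (k ^ 2)]
    calc (k + 3) ^ 3 * (k + 3 - 3)! ≤ 6 * ((k + 3) * (k + 2) * (k + 1)) * k ! :=
          Nat.mul_le_mul_right _ hcube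
      _ = 6 * (k + 3)! := by simp only [Nat.factorial_succ]; ring

theorem Real.rpow_mul_rpow_le_rpow_add {a b c x y : ℝ} (ha : 0 < a) (hb : 0 ≤ b)
    (hba : b ≤ a) (hac : a ≤ c) (hx : 0 ≤ x) (hy : 0 ≤ y) :
    a ^ x * b ^ y ≤ c ^ (x + y) :=
  calc a ^ x * b ^ y ≤ a ^ x * a ^ y := by gcongr
    _ = a ^ (x + y) := (Real.rpow_add ha x y).symm
    _ ≤ c ^ (x + y) := Real.rpow_le_rpow ha.le hac (add_nonneg hx hy)

theorem factorial_sub_one_rpow_mul_factorial_sub_three_rpow_le (n : ℕ) {e : ℝ} (he : 0 ≤ e) :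
    ((n - 1)! : ℝ) ^ (3 * e / 4) * ((n - 3)! : ℝ) ^ (e / 4) ≤ (n ! : ℝ) ^ e := by
  have h := Real.rpow_mul_rpow_le_rpow_add (a := ((n - 1)! : ℝ)) (b := ((n - 3)! : ℝ))
    (c := (n ! : ℝ)) (x := 3 * e / 4) (y := e / 4) (by positivity) (by positivity)
    (by gcongr; omega) (by gcongr; omega) (by positivity) (by positivity)
  rwa [show 3 * e / 4 + e / 4 = e by ring] at h

theorem faaDiBruno_factor_le (k n : ℕ) :
    ((n - 1)! : ℝ) ^ (3 * (k : ℝ) / 4) * ((n - 3)! : ℝ) ^ ((k : ℝ) / 4) /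
      ((k ! : ℝ) * (n ! : ℝ) ^ k) ≤ 1 / (k ! : ℝ) := by
  have h := factorial_sub_one_rpow_mul_factorial_sub_three_rpow_le n k.cast_nonneg
  rw [Real.rpow_natCast] at h
  calc _ ≤ (n ! : ℝ) ^ k / ((k ! : ℝ) * (n ! : ℝ) ^ k) := by gcongr
    _ = 1 / (k ! : ℝ) := by field_simp

theorem faaDiBruno_last_factor_le {k : ℕ} (n : ℕ) (hk : 1 ≤ k) :
    ((n - 1)! : ℝ) ^ (3 * ((k : ℝ) - 1) / 4) * ((n - 3)! : ℝ) ^ (((k : ℝ) - 1) / 4) *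
        ((n - 3)! : ℝ) / ((k ! : ℝ) * (n ! : ℝ) ^ k) ≤
      ((n - 3)! : ℝ) / ((k ! : ℝ) * (n ! : ℝ)) := by
  have hk' : (k : ℝ) - 1 = ((k - 1 : ℕ) : ℝ) := by rw [Nat.cast_sub hk, Nat.cast_one]
  have h := factorial_sub_one_rpow_mul_factorial_sub_three_rpow_le n (k - 1).cast_nonneg
  rw [Real.rpow_natCast, ← hk'] at h
  have hpow : (n ! : ℝ) ^ k = (n ! : ℝ) ^ (k - 1) * (n ! : ℝ) := by
    rw [← pow_succ, Nat.sub_add_cancel hk]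
  calc _ ≤ (n ! : ℝ) ^ (k - 1) * ((n - 3)! : ℝ) / ((k ! : ℝ) * (n ! : ℝ) ^ k) := by gcongr
    _ = ((n - 3)! : ℝ) / ((k ! : ℝ) * (n ! : ℝ)) := by rw [hpow]; field_simp

theorem binomial_prefactor_le {m j : ℕ} (hj : j ≤ m) (hm : 1 ≤ m) {P c : ℝ} (hP : P ≤ m.choose j)
    (hc : 0 ≤ c) :
    P * (c * ((m - j - 2)! : ℝ) ^ ((1 : ℝ) / 4) * ((m - j)! : ℝ) ^ ((3 : ℝ) / 4) * (j ! : ℝ)) /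
        (((m - 3)! : ℝ) * ((m - j + 1 : ℕ) : ℝ) ^ ((1 : ℝ) / 4) *
          ((m - j + 3 : ℕ) : ℝ) ^ ((3 : ℝ) / 4)) ≤
      (m : ℝ) ^ 3 * c := by
  have hsplit : ((m - j)! : ℝ) ^ ((1 : ℝ) / 4) * ((m - j)! : ℝ) ^ ((3 : ℝ) / 4) = (m - j)! := by
    rw [← Real.rpow_add (by positivity)]; norm_num
  have hbinom : (m.choose j : ℝ) * j ! * (m - j)! = m ! := by
    exact_mod_cast Nat.choose_mul_factorial_mul_factorial hj
  have hfact : (m ! : ℝ) ≤ (m : ℝ) ^ 3 * (m - 3)! := by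
    exact_mod_cast Nat.factorial_le_pow_three_mul_factorial_sub_three hm
  have hnum : ((m - j - 2)! : ℝ) ^ ((1 : ℝ) / 4) ≤ ((m - j)! : ℝ) ^ ((1 : ℝ) / 4) :=
    Real.rpow_le_rpow (by positivity) (by exact_mod_cast Nat.factorial_le (by omega)) (by norm_num)
  have hden₁ : 1 ≤ ((m - j + 1 : ℕ) : ℝ) ^ ((1 : ℝ) / 4) :=
    Real.one_le_rpow (by norm_cast; omega) (by norm_num)
  have hden₃ : 1 ≤ ((m - j + 3 : ℕ) : ℝ) ^ ((3 : ℝ) / 4) :=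
    Real.one_le_rpow (by norm_cast; omega) (by norm_num)
  calc _ ≤ m.choose j * (c * ((m - j)! : ℝ) ^ ((1 : ℝ) / 4) * ((m - j)! : ℝ) ^ ((3 : ℝ) / 4) *
          (j ! : ℝ)) / (((m - 3)! : ℝ) * 1 * 1) := by
        gcongr ?_ * (_ * ?_ * _ * _) / (_ * ?_ * ?_)
    _ = m.choose j * j ! * (((m - j)! : ℝ) ^ ((1 : ℝ) / 4) * ((m - j)! : ℝ) ^ ((3 : ℝ) / 4)) *
          c / (m - 3)! := by ring
    _ = m ! * c / (m - 3)! := by rw [hsplit, hbinom]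
    _ ≤ (m : ℝ) ^ 3 * c := by
        rw [div_le_iff₀ (by positivity)]
        nlinarith

theorem Nat.pow_three_mul_factorial_mul_factorial_le {m i N : ℕ} (hm : m ≤ 2 * (i * N))
    (hN : 1 ≤ N) : m ^ 3 * (i - 3)! * (N - 3)! ≤ 48 * i ! * i ^ 3 * N ! :=
  calc m ^ 3 * (i - 3)! * (N - 3)! ≤ (2 * (i * N)) ^ 3 * i ! * (N - 3)! := by
        gcongr; omega
    _ = 8 * i ^ 3 * i ! * (N ^ 3 * (N - 3)!) := by ring
    _ ≤ 8 * i ^ 3 * i ! * (6 * N !) := by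
        gcongr 8 * i ^ 3 * i ! * ?_; exact Nat.pow_three_mul_factorial_sub_three_le hN
    _ = 48 * i ! * i ^ 3 * N ! := by ring

theorem wt_le_of_mlt {a b : MIdx} (h : mlt a b) : wt a ≤ wt b := by
  rcases h with h | ⟨h, -⟩ <;> omega

theorem one_le_wt_of_mlt_zero {b : MIdx} (h : mlt 0 b) : 1 ≤ wt b := by
  rcases h with h | ⟨-, k, -, hk⟩
  · exact Nat.succ_le_of_lt (by simpa [wt] using h)
  · exact hk.trans_le (single_le_sum (f := b) (fun _ _ => Nat.zero_le _) (mem_univ k))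

theorem wt_sum_smul {ι : Type*} (t : Finset ι) (k : ι → ℕ) (l : ι → MIdx) :
    wt (∑ x ∈ t, k x • l x) = ∑ x ∈ t, k x * wt (l x) := by
  simp only [wt, Finset.sum_apply, Pi.smul_apply, smul_eq_mul, Finset.mul_sum]
  exact Finset.sum_comm

theorem Pset.wt_le_mul_wt_last {s i : ℕ} {β : MIdx} {kl : (Fin s → ℕ) × (Fin s → MIdx)}
    (hkl : kl ∈ Pset s i β) (hs : 1 ≤ s) :
    wt β ≤ i * wt (kl.2 ⟨s - 1, Nat.sub_lt hs Nat.one_pos⟩) := by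
  obtain ⟨-, -, hord, hsum, hβ⟩ := hkl
  have hmax : ∀ l, wt (kl.2 l) ≤ wt (kl.2 ⟨s - 1, Nat.sub_lt hs Nat.one_pos⟩) := fun l => by
    rcases (Fin.le_def.2 (Nat.le_sub_one_of_lt l.isLt) :
        l ≤ ⟨s - 1, Nat.sub_lt hs Nat.one_pos⟩).eq_or_lt with h | h
    · rw [h]
    · exact wt_le_of_mlt (hord _ _ h)
  rw [← hβ, wt_sum_smul, ← hsum, sum_mul]
  exact sum_le_sum fun l _ => Nat.mul_le_mul_left _ (hmax l)

/-- there is `C > 0` such that for `⌊m/2⌋+1 ≤ j ≤ m`, `1 ≤ i, s ≤ j`,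
`|α| = m`, `|β| = j`, `β ≤ α` and `(k₁,…,k_s; λ₁,…,λ_s) ∈ P_s(i,β)`, the quantity `𝒟`
(as displayed) satisfies `𝒟 ≤ C (i!/(k₁!⋯k_s!)) i³`. -/
theorem statement14 :
    ∃ C : ℝ, 0 < C ∧ ∀ m j i s : ℕ, m / 2 + 1 ≤ j → j ≤ m → 1 ≤ i → i ≤ j →
      ∀ hs : 1 ≤ s, s ≤ j →
      ∀ α β : MIdx, wt α = m → wt β = j → (∀ c, β c ≤ α c) →
      ∀ kl : (Fin s → ℕ) × (Fin s → MIdx), kl ∈ Pset s i β →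
        (∏ c, (Nat.choose (α c) (β c) : ℝ)) *
          ((Nat.factorial (i - 3) : ℝ) * (Nat.factorial (m - j - 2) : ℝ) ^ ((1:ℝ)/4) *
            (Nat.factorial (m - j) : ℝ) ^ ((3:ℝ)/4) * (Nat.factorial (wt β) : ℝ)) /
          ((Nat.factorial (m - 3) : ℝ) * ((m - j + 1 : ℕ) : ℝ) ^ ((1:ℝ)/4) *
            ((m - j + 3 : ℕ) : ℝ) ^ ((3:ℝ)/4)) *
          (((Nat.factorial (wt (kl.2 ⟨s - 1, by omega⟩) - 1) : ℝ) ^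
              ((3 * ((kl.1 ⟨s - 1, by omega⟩ : ℝ) - 1)) / 4) *
            (Nat.factorial (wt (kl.2 ⟨s - 1, by omega⟩) - 3) : ℝ) ^
              (((kl.1 ⟨s - 1, by omega⟩ : ℝ) - 1) / 4) *
            (Nat.factorial (wt (kl.2 ⟨s - 1, by omega⟩) - 3) : ℝ)) /
            ((Nat.factorial (kl.1 ⟨s - 1, by omega⟩) : ℝ) *
              (Nat.factorial (wt (kl.2 ⟨s - 1, by omega⟩)) : ℝ) ^ (kl.1 ⟨s - 1, by omega⟩))) *
          ∏ l ∈ Finset.univ.erase (⟨s - 1, by omega⟩ : Fin s),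
            ((Nat.factorial (wt (kl.2 l) - 1) : ℝ) ^ ((3 * (kl.1 l : ℝ)) / 4) *
              (Nat.factorial (wt (kl.2 l) - 3) : ℝ) ^ ((kl.1 l : ℝ) / 4)) /
            ((Nat.factorial (kl.1 l) : ℝ) * (Nat.factorial (wt (kl.2 l)) : ℝ) ^ (kl.1 l))
        ≤ C * ((Nat.factorial i : ℝ) / ∏ l : Fin s, (Nat.factorial (kl.1 l) : ℝ)) *
            (i : ℝ) ^ 3 := by
  refine ⟨48, by norm_num, fun m j i s hjm hj _ _ hs _ α β hα hβ _ kl hkl => ?_⟩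
  set last : Fin s := ⟨s - 1, by omega⟩
  set N := wt (kl.2 last)
  have hN : 1 ≤ N := one_le_wt_of_mlt_zero (hkl.2.1 last)
  have hjN : j ≤ i * N := hβ ▸ Pset.wt_le_mul_wt_last hkl hs
  have hchoose : ∏ c, ((α c).choose (β c) : ℝ) ≤ m.choose j := by
    rw [← hα, ← hβ]; exact_mod_cast prod_choose_le_choose_sum univ α β
  have hfactors : ∏ l ∈ univ.erase last,
      ((wt (kl.2 l) - 1)! : ℝ) ^ (3 * (kl.1 l : ℝ) / 4) *
        ((wt (kl.2 l) - 3)! : ℝ) ^ ((kl.1 l : ℝ) / 4) /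
        (((kl.1 l)! : ℝ) * ((wt (kl.2 l))! : ℝ) ^ kl.1 l) ≤
      ∏ l ∈ univ.erase last, 1 / ((kl.1 l)! : ℝ) :=
    prod_le_prod (fun _ _ => by positivity) fun l _ => faaDiBruno_factor_le _ _
  have hkey : (m : ℝ) ^ 3 * (i - 3)! * (N - 3)! ≤ 48 * i ! * i ^ 3 * N ! := by
    exact_mod_cast Nat.pow_three_mul_factorial_mul_factorial_le (by omega) hN
  rw [hβ]
  calc _ ≤ (m : ℝ) ^ 3 * (i - 3)! * (((N - 3)! : ℝ) / (((kl.1 last)! : ℝ) * N !)) *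
          ∏ l ∈ univ.erase last, 1 / ((kl.1 l)! : ℝ) := by
        gcongr ?_ * ?_ * ?_
        · exact binomial_prefactor_le hj (by omega) hchoose (by positivity)
        · exact faaDiBruno_last_factor_le _ (hkl.1 last)
    _ = (m : ℝ) ^ 3 * (i - 3)! * (N - 3)! / N ! / ∏ l, ((kl.1 l)! : ℝ) := by
        rw [← mul_prod_erase univ _ (mem_univ last), prod_div_distrib, prod_const_one]
        field_simp
    _ ≤ 48 * i ! * i ^ 3 / ∏ l, ((kl.1 l)! : ℝ) := by
        gcongr
        rwa [div_le_iff₀ (by positivity)]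
    _ = _ := by ring
end
end

section
/- Let τ > 0 and let p be a smooth real-valued function on ℝ³ for which the quantities below are finite. For each multi-index β ∈ ℕ₀³ with |β| ≥ 1, set b_β = ((τ^{|β|+2}/(|β|−1)!) ‖D² ∂^β p‖_{L²(ℝ³)})^{3/4} · ((τ^{|β|}/(|β|−3)!) ‖∂^β p‖_{L²(ℝ³)})^{1/4}. Then there exists a constant C > 0 (independent of p and τ) such that Σ_{β ∈ ℕ₀³, |β| ≥ 1} b_β ≤ C ‖p‖_{A(τ)}. -/
open MeasureTheory Finset

noncomputable section

variable {E : Type*} [NormedAddCommGroup E] [NormedSpace ℝ E]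

/-- with `b_β = ((τ^{|β|+2}/(|β|−1)!)‖D²∂^β p‖_{L²})^{3/4}
((τ^{|β|}/(|β|−3)!)‖∂^β p‖_{L²})^{1/4}` one has `Σ_{|β|≥1} b_β ≤ C ‖p‖_{A(τ)}`,
with `C` independent of `p` and `τ`; `‖D²∂^β p‖` collects all second-order
derivatives of `∂^β p`. -/
theorem statement19 :
    ∃ C : ℝ, 0 < C ∧ ∀ τ : ℝ, 0 < τ → ∀ p : Vec3 → ℝ, ContDiff ℝ (⊤ : ℕ∞) p →
      Summable (AFam τ p) →
      ∑' β : {β : MIdx // 1 ≤ wt β},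
        (τ ^ (wt β.1 + 2) / (Nat.factorial (wt β.1 - 1)) *
            ∑ γ ∈ Finset.Nat.antidiagonalTuple 3 2, l2 (pda (β.1 + γ) p)) ^ ((3:ℝ)/4) *
        (τ ^ wt β.1 / (Nat.factorial (wt β.1 - 3)) * l2 (pda β.1 p)) ^ ((1:ℝ)/4)
      ≤ C * anorm τ p := by
  refine ⟨19/4, by norm_num, fun τ hτ p _ hsum => ?_⟩
  set F := AFam τ p with hF
  have hF0 : ∀ α, 0 ≤ F α := fun α =>
    mul_nonneg (div_nonneg (pow_nonneg hτ.le _) (Nat.cast_nonneg _)) ENNReal.toReal_nonneg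
  have hwt : ∀ (β γ : MIdx), γ ∈ Finset.Nat.antidiagonalTuple 3 2 → wt (β + γ) = wt β + 2 := by
    intro β γ hγ
    rw [Finset.Nat.mem_antidiagonalTuple] at hγ
    simp only [wt, Pi.add_apply, Finset.sum_add_distrib, hγ]
  -- X β = sum over γ of F (β + γ)
  have hX : ∀ β : MIdx, τ ^ (wt β + 2) / (Nat.factorial (wt β - 1)) *
      ∑ γ ∈ Finset.Nat.antidiagonalTuple 3 2, l2 (pda (β + γ) p)
      = ∑ γ ∈ Finset.Nat.antidiagonalTuple 3 2, F (β + γ) := by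
    intro β
    rw [Finset.mul_sum]
    refine Finset.sum_congr rfl fun γ hγ => ?_
    have h23 : wt β + 2 - 3 = wt β - 1 := by omega
    rw [hF, AFam, hwt β γ hγ, h23]
  have hinj : ∀ γ : MIdx, Function.Injective
      (fun β : {β : MIdx // 1 ≤ wt β} => β.1 + γ) := by
    intro γ β β' h
    exact Subtype.ext (by simpa using add_left_injective γ h)
  have hsum1 : ∀ γ : MIdx, Summable (fun β : {β : MIdx // 1 ≤ wt β} => F (β.1 + γ)) :=
    fun γ => hsum.comp_injective (hinj γ)
  have hsum2 : Summable (fun β : {β : MIdx // 1 ≤ wt β} =>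
      ∑ γ ∈ Finset.Nat.antidiagonalTuple 3 2, F (β.1 + γ)) :=
    summable_sum (fun γ _ => hsum1 γ)
  have hsumF : Summable (fun β : {β : MIdx // 1 ≤ wt β} => F β.1) :=
    hsum.comp_injective Subtype.coe_injective
  set f : {β : MIdx // 1 ≤ wt β} → ℝ := fun β =>
    (3/4) * (∑ γ ∈ Finset.Nat.antidiagonalTuple 3 2, F (β.1 + γ)) + (1/4) * F β.1 with hf
  have hsumf : Summable f := ((hsum2.mul_left _).add (hsumF.mul_left _))
  have hb : ∀ β : {β : MIdx // 1 ≤ wt β},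
      (τ ^ (wt β.1 + 2) / (Nat.factorial (wt β.1 - 1)) *
          ∑ γ ∈ Finset.Nat.antidiagonalTuple 3 2, l2 (pda (β.1 + γ) p)) ^ ((3:ℝ)/4) *
      (τ ^ wt β.1 / (Nat.factorial (wt β.1 - 3)) * l2 (pda β.1 p)) ^ ((1:ℝ)/4) ≤ f β := by
    intro β
    rw [hX β.1]
    exact Real.geom_mean_le_arith_mean2_weighted (by norm_num) (by norm_num)
      (Finset.sum_nonneg (fun γ _ => hF0 _)) (hF0 _) (by norm_num)
  have hbnn : ∀ β : {β : MIdx // 1 ≤ wt β}, 0 ≤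
      (τ ^ (wt β.1 + 2) / (Nat.factorial (wt β.1 - 1)) *
          ∑ γ ∈ Finset.Nat.antidiagonalTuple 3 2, l2 (pda (β.1 + γ) p)) ^ ((3:ℝ)/4) *
      (τ ^ wt β.1 / (Nat.factorial (wt β.1 - 3)) * l2 (pda β.1 p)) ^ ((1:ℝ)/4) := by
    intro β
    have h1 : 0 ≤ τ ^ (wt β.1 + 2) / (Nat.factorial (wt β.1 - 1)) *
        ∑ γ ∈ Finset.Nat.antidiagonalTuple 3 2, l2 (pda (β.1 + γ) p) := by
      rw [hX β.1]; exact Finset.sum_nonneg (fun γ _ => hF0 _)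
    exact mul_nonneg (Real.rpow_nonneg h1 _) (Real.rpow_nonneg (hF0 _) _)
  have hsb : Summable (fun β : {β : MIdx // 1 ≤ wt β} =>
      (τ ^ (wt β.1 + 2) / (Nat.factorial (wt β.1 - 1)) *
          ∑ γ ∈ Finset.Nat.antidiagonalTuple 3 2, l2 (pda (β.1 + γ) p)) ^ ((3:ℝ)/4) *
      (τ ^ wt β.1 / (Nat.factorial (wt β.1 - 3)) * l2 (pda β.1 p)) ^ ((1:ℝ)/4)) :=
    Summable.of_nonneg_of_le hbnn hb hsumf
  calc _ ≤ ∑' β, f β := Summable.tsum_le_tsum hb hsb hsumf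
    _ = (3/4) * (∑' β : {β : MIdx // 1 ≤ wt β},
          ∑ γ ∈ Finset.Nat.antidiagonalTuple 3 2, F (β.1 + γ)) +
        (1/4) * ∑' β : {β : MIdx // 1 ≤ wt β}, F β.1 := by
      rw [hf, Summable.tsum_add (hsum2.mul_left _) (hsumF.mul_left _), tsum_mul_left, tsum_mul_left]
    _ ≤ (3/4) * (6 * anorm τ p) + (1/4) * anorm τ p := by
      gcongr
      · rw [Summable.tsum_finsetSum (fun γ _ => hsum1 γ)]
        have h6 : (Finset.Nat.antidiagonalTuple 3 2).card = 6 := by decide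
        calc ∑ γ ∈ Finset.Nat.antidiagonalTuple 3 2,
              ∑' β : {β : MIdx // 1 ≤ wt β}, F (β.1 + γ)
            ≤ ∑ γ ∈ Finset.Nat.antidiagonalTuple 3 2, anorm τ p := by
              refine Finset.sum_le_sum fun γ _ => ?_
              exact Summable.tsum_le_tsum_of_inj _ (hinj γ) (fun c _ => hF0 c)
                (fun β => le_rfl) (hsum1 γ) hsum
          _ = 6 * anorm τ p := by rw [Finset.sum_const, h6]; ring
      · exact Summable.tsum_le_tsum_of_inj _ Subtype.coe_injective (fun c _ => hF0 c)
          (fun β => le_rfl) hsumF hsum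
    _ = (19/4) * anorm τ p := by ring


end
end
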